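/- arXiv:1910.04321 — 4 statements merged into one kernel-verified Lean document; each statement's English description precedes it below -/
import Mathlib

section
/- Let D = (E, ℱ) be a set system and let e₁, e₂ ∈ E. Then (D + e₁) + e₂ = (D + e₂) + e₁; that is, loop complementation operations on distinct or equal elements commute, so loop complementation on a subset A ⊆ E is well-defined independently of the order in which its elements are processed. -/
/-!
Write `D + e = ℱ △ ℱ⁺ₑ`, where `ℱ⁺ₑ = {F ∪ {e} : F ∈ ℱ, e ∉ F}`. The map `ℱ ↦ ℱ⁺ₑ` is additive
for `△`, since `X ∈ ℱ⁺ₑ` just says `e ∈ X` and `X \ {e} ∈ ℱ`, and two such maps commute. Hence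
`(D + e₁) + e₂ = ℱ △ ℱ⁺₁ △ ℱ⁺₂ △ (ℱ⁺₁)⁺₂` is symmetric in `e₁` and `e₂`.
-/

open scoped symmDiff

variable {α : Type*} [DecidableEq α]

/-- Loop complementation of a collection of feasible sets on an element `e`:
`ℱ △ { F ∪ {e} : F ∈ ℱ, e ∉ F }`. -/
def loopComp (F : Set (Finset α)) (e : α) : Set (Finset α) :=
  F ∆ {X | ∃ Y ∈ F, e ∉ Y ∧ X = insert e Y}

namespace LoopComp

def augment (F : Set (Finset α)) (e : α) : Set (Finset α) :=
  {X | ∃ Y ∈ F, e ∉ Y ∧ X = insert e Y}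

theorem loopComp_eq_symmDiff_augment (F : Set (Finset α)) (e : α) :
    loopComp F e = F ∆ augment F e :=
  rfl

theorem mem_augment {F : Set (Finset α)} {e : α} {X : Finset α} :
    X ∈ augment F e ↔ e ∈ X ∧ X.erase e ∈ F := by
  constructor
  · rintro ⟨Y, hY, heY, rfl⟩
    simpa [Finset.erase_insert heY] using hY
  · rintro ⟨heX, hX⟩
    exact ⟨X.erase e, hX, Finset.notMem_erase e X, (Finset.insert_erase heX).symm⟩

theorem augment_symmDiff (A B : Set (Finset α)) (e : α) :
    augment (A ∆ B) e = augment A e ∆ augment B e := by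
  ext X
  simp only [Set.mem_symmDiff, mem_augment]
  tauto

theorem augment_comm (F : Set (Finset α)) (e₁ e₂ : α) :
    augment (augment F e₁) e₂ = augment (augment F e₂) e₁ := by
  ext X
  simp only [mem_augment, Finset.mem_erase, Finset.erase_right_comm (s := X) (a := e₁)]
  tauto

end LoopComp

open LoopComp in
theorem loopComp_comm_general (F : Set (Finset α))
    (e₁ e₂ : α) :
    loopComp (loopComp F e₁) e₂ = loopComp (loopComp F e₂) e₁ := by
  simp only [loopComp_eq_symmDiff_augment, augment_symmDiff, augment_comm F e₁ e₂]
  ac_rfl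

/-- Loop complementation operations commute. -/
theorem loopComp_comm (E : Finset α) (F : Set (Finset α)) (hF : ∀ X ∈ F, X ⊆ E)
    (e₁ e₂ : α) (he₁ : e₁ ∈ E) (he₂ : e₂ ∈ E) :
    loopComp (loopComp F e₁) e₂ = loopComp (loopComp F e₂) e₁ :=
  loopComp_comm_general F e₁ e₂
end

section
/- Let 𝐀 be a symmetric matrix over a field whose rows and columns are indexed (in the same order) by a finite set E, and let ℱ = {X ⊆ E : 𝐀[X] is nonsingular}, where 𝐀[∅] is considered nonsingular by convention. Then D(𝐀) = (E, ℱ) is a delta-matroid. -/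
open scoped symmDiff

variable {α : Type*} [DecidableEq α]

/-- A collection of feasible sets satisfies the Symmetric Exchange Axiom. -/
def SatisfiesSEA (F : Set (Finset α)) : Prop :=
  ∀ X ∈ F, ∀ Y ∈ F, ∀ u ∈ X ∆ Y, ∃ v ∈ X ∆ Y, X ∆ ({u, v} : Finset α) ∈ F

/-- The set system `(E, F)` is a delta-matroid. -/
def IsDeltaMatroid (E : Finset α) (F : Set (Finset α)) : Prop :=
  F.Nonempty ∧ (∀ X ∈ F, X ⊆ E) ∧ SatisfiesSEA F

/-- The feasible sets of the set system `D(𝐀)` determined by a matrix `𝐀` with rows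
and columns indexed by `E`: a set `X` is feasible precisely when the principal
submatrix `𝐀[X]` is nonsingular (the empty submatrix has determinant `1`, so `∅` is
feasible by convention). -/
def matFeasible {E : Type*} [Fintype E] [DecidableEq E] {K : Type*} [Field K]
    (A : Matrix E E K) : Set (Finset E) :=
  {X | (A.submatrix (fun i : X => (i : E)) (fun j : X => (j : E))).det ≠ 0}

/-!
Fix a feasible `X`, write `M` for `A` with the rows outside `X` replaced by identity rows and
`N` for the same with `X` and its complement swapped, and let `C = N * M⁻¹`. Row-merging is
compatible with multiplication on the right, so `det C[Z] * det A[X] = det A[X ∆ Z]`: the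
feasible sets are exactly the `X ∆ Z` with `C[Z]` nonsingular. Symmetry of `A` gives
`Mᵀ S N = Nᵀ S M` for the sign matrix `S` of `X`, hence `S C = Cᵀ S`, so `C u v` and `C v u`
vanish together. Now take a feasible `Y` and `u ∈ X ∆ Y`. As `C[X ∆ Y]` is nonsingular, either
`C u u ≠ 0` and `v = u` works, or its column `u` has a nonzero entry `C v u`, and then
`det C[{u, v}] = -C u v * C v u ≠ 0`.
-/

namespace Matrix

section PiecewiseRows

variable {m n : Type*} [DecidableEq m] {R : Type*}

def piecewiseRows (Z : Finset m) (M N : Matrix m n R) : Matrix m n R :=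
  of fun i => if i ∈ Z then M i else N i

@[simp]
lemma piecewiseRows_apply (Z : Finset m) (M N : Matrix m n R) (i : m) (j : n) :
    piecewiseRows Z M N i j = if i ∈ Z then M i j else N i j := by
  simp only [piecewiseRows, of_apply]
  split_ifs <;> rfl

lemma piecewiseRows_mul [Fintype n] [NonUnitalNonAssocSemiring R] {l : Type*}
    (Z : Finset m) (M N : Matrix m n R) (B : Matrix n l R) :
    piecewiseRows Z M N * B = piecewiseRows Z (M * B) (N * B) := by
  ext i j
  by_cases hi : i ∈ Z <;> simp [mul_apply, hi]

variable [Fintype m]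

lemma piecewiseRows_piecewiseRows_compl [Zero R] [One R] (A : Matrix m m R) (X Z : Finset m) :
    piecewiseRows Z (piecewiseRows Xᶜ A 1) (piecewiseRows X A 1) =
      piecewiseRows (X ∆ Z) A 1 := by
  ext i j
  by_cases hX : i ∈ X <;> by_cases hZ : i ∈ Z <;> simp [Finset.mem_symmDiff, hX, hZ]

lemma det_piecewiseRows_one [CommRing R] (A : Matrix m m R) (Z : Finset m) :
    (piecewiseRows Z A 1).det = (A.submatrix ((↑) : Z → m) (↑)).det := by
  have hlower : ∀ i ∉ Z, ∀ j ∈ Z, piecewiseRows Z A 1 i j = 0 := fun i hi j hj => by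
    simp [hi, (ne_of_mem_of_not_mem hj hi).symm]
  have hupper : toSquareBlockProp (piecewiseRows Z A 1) (· ∈ Z) = A.submatrix (↑) (↑) := by
    ext i j
    simp [toSquareBlockProp, toBlock_apply, i.2]
  have hcompl : toSquareBlockProp (piecewiseRows Z A 1) (· ∉ Z) = 1 := by
    ext i j
    simp [toSquareBlockProp, toBlock_apply, i.2, one_apply, Subtype.ext_iff]
  rw [twoBlockTriangular_det _ (· ∈ Z) hlower, hupper, hcompl, det_one, mul_one]
  convert rfl using 2

lemma transpose_piecewiseRows_mul_signs_mul_comm [Ring R] {A : Matrix m m R}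
    (hA : A.IsSymm) (X : Finset m) :
    (piecewiseRows X A 1)ᵀ *
        (diagonal (fun i => if i ∈ X then -1 else 1) * piecewiseRows Xᶜ A 1) =
      (piecewiseRows Xᶜ A 1)ᵀ *
        (diagonal (fun i => if i ∈ X then -1 else 1) * piecewiseRows X A 1) := by
  ext a b
  rw [mul_apply, mul_apply]
  simp only [diagonal_mul, transpose_apply, piecewiseRows_apply, Finset.mem_compl]
  by_cases ha : a ∈ X <;> by_cases hb : b ∈ X <;>
    simp +contextual [ha, hb, hA.apply a b, one_apply, Finset.sum_ite, Finset.sum_ite_eq']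

end PiecewiseRows

section Pivot

variable {E : Type*} [Fintype E] [DecidableEq E] {K : Type*} [Field K]

lemma det_piecewiseRows_ne_zero_iff {A : Matrix E E K} {X : Finset E} :
    (piecewiseRows X A 1).det ≠ 0 ↔ X ∈ matFeasible A := by
  rw [det_piecewiseRows_one]
  rfl

/-- Tucker's principal pivot transform of `A` on `X`, written without a block decomposition. -/
noncomputable def pivot (A : Matrix E E K) (X : Finset E) : Matrix E E K :=
  piecewiseRows Xᶜ A 1 * (piecewiseRows X A 1)⁻¹

variable {A : Matrix E E K} {X : Finset E}

lemma pivot_mul (hX : X ∈ matFeasible A) :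
    pivot A X * piecewiseRows X A 1 = piecewiseRows Xᶜ A 1 := by
  rw [pivot, Matrix.mul_assoc,
    nonsing_inv_mul _ (isUnit_iff_ne_zero.2 (det_piecewiseRows_ne_zero_iff.2 hX)), mul_one]

lemma symmDiff_mem_matFeasible_iff (hX : X ∈ matFeasible A) (Z : Finset E) :
    X ∆ Z ∈ matFeasible A ↔ Z ∈ matFeasible (pivot A X) := by
  have hmul :
      piecewiseRows Z (pivot A X) 1 * piecewiseRows X A 1 = piecewiseRows (X ∆ Z) A 1 := by
    rw [piecewiseRows_mul, pivot_mul hX, Matrix.one_mul, piecewiseRows_piecewiseRows_compl]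
  rw [← det_piecewiseRows_ne_zero_iff, ← det_piecewiseRows_ne_zero_iff, ← hmul, det_mul]
  exact mul_ne_zero_iff_right (det_piecewiseRows_ne_zero_iff.2 hX)

lemma signs_mul_pivot (hA : A.IsSymm) (hX : X ∈ matFeasible A) :
    diagonal (fun i => if i ∈ X then -1 else 1) * pivot A X =
      (pivot A X)ᵀ * diagonal (fun i => if i ∈ X then -1 else 1) := by
  set S : Matrix E E K := diagonal fun i => if i ∈ X then -1 else 1
  set M := piecewiseRows X A 1
  have hM : IsUnit M.det := isUnit_iff_ne_zero.2 (det_piecewiseRows_ne_zero_iff.2 hX)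
  have hMt : IsUnit Mᵀ.det := by rwa [det_transpose]
  have hpivot : pivot A X = piecewiseRows Xᶜ A 1 * M⁻¹ := rfl
  calc S * pivot A X = (Mᵀ)⁻¹ * (Mᵀ * (S * piecewiseRows Xᶜ A 1)) * M⁻¹ := by
        rw [← Matrix.mul_assoc (Mᵀ)⁻¹, nonsing_inv_mul _ hMt, Matrix.one_mul, hpivot,
          Matrix.mul_assoc]
    _ = (Mᵀ)⁻¹ * ((piecewiseRows Xᶜ A 1)ᵀ * (S * M)) * M⁻¹ := by
        rw [transpose_piecewiseRows_mul_signs_mul_comm hA]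
    _ = (pivot A X)ᵀ * S := by
        rw [hpivot, transpose_mul, transpose_nonsing_inv]
        simp only [Matrix.mul_assoc, mul_nonsing_inv _ hM, Matrix.mul_one]

lemma pivot_apply_eq_zero_iff (hA : A.IsSymm) (hX : X ∈ matFeasible A) (a b : E) :
    pivot A X a b = 0 ↔ pivot A X b a = 0 := by
  have hsign : ∀ i : E, (if i ∈ X then -1 else 1 : K) ≠ 0 := fun i => by
    split_ifs <;> simp
  have h := congrFun (congrFun (signs_mul_pivot hA hX) a) b
  rw [diagonal_mul, mul_diagonal, transpose_apply] at h
  rw [← mul_eq_zero_iff_left (hsign a), h, mul_eq_zero_iff_right (hsign b)]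

end Pivot

end Matrix

section Minors

open Matrix

variable {E : Type*} [Fintype E] [DecidableEq E] {K : Type*} [Field K]

lemma empty_mem_matFeasible (A : Matrix E E K) : ∅ ∈ matFeasible A := by
  simp [matFeasible]

lemma singleton_mem_matFeasible_iff {A : Matrix E E K} {u : E} :
    {u} ∈ matFeasible A ↔ A u u ≠ 0 := by
  rw [matFeasible, Set.mem_ofPred_eq,
    det_eq_elem_of_card_eq_one (by simp) ⟨u, Finset.mem_singleton_self u⟩]
  rfl

lemma pair_mem_matFeasible_iff {A : Matrix E E K} {u v : E} (huv : u ≠ v) :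
    {u, v} ∈ matFeasible A ↔ A u u * A v v - A u v * A v u ≠ 0 := by
  let e : Fin 2 ≃ ({u, v} : Finset E) := Equiv.ofBijective
    ![⟨u, by simp⟩, ⟨v, by simp⟩] <| by
      rw [Fintype.bijective_iff_injective_and_card]
      refine ⟨fun i j hij => ?_, ?_⟩
      · fin_cases i <;> fin_cases j <;> simp_all [Subtype.ext_iff, eq_comm]
      · rw [Fintype.card_fin, Fintype.card_coe, Finset.card_pair huv]
  rw [matFeasible, Set.mem_ofPred_eq, ← det_submatrix_equiv_self e, det_fin_two]
  rfl

lemma exists_pair_mem_matFeasible {C : Matrix E E K} (hC : ∀ a b, C a b = 0 ↔ C b a = 0)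
    {S : Finset E} (hS : S ∈ matFeasible C) {u : E} (hu : u ∈ S) :
    ∃ v ∈ S, {u, v} ∈ matFeasible C := by
  by_cases huu : C u u = 0
  · obtain ⟨v, hv, hvu⟩ : ∃ v ∈ S, C v u ≠ 0 := by
      by_contra! h
      exact hS (det_eq_zero_of_column_eq_zero ⟨u, hu⟩ fun i => h i i.2)
    have huv : u ≠ v := by
      rintro rfl
      exact hvu huu
    refine ⟨v, hv, (pair_mem_matFeasible_iff huv).2 ?_⟩
    rw [huu, zero_mul, zero_sub, neg_ne_zero]
    exact mul_ne_zero (mt (hC u v).1 hvu) hvu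
  · refine ⟨u, hu, ?_⟩
    rwa [Finset.pair_eq_singleton, singleton_mem_matFeasible_iff]

end Minors

/-- `D(𝐀)` is a delta-matroid for any symmetric matrix `𝐀` over a field. -/
theorem matFeasible_isDeltaMatroid {E : Type*} [Fintype E] [DecidableEq E]
    {K : Type*} [Field K] (A : Matrix E E K) (hA : A.IsSymm) :
    IsDeltaMatroid (Finset.univ : Finset E) (matFeasible A) := by
  refine ⟨⟨∅, empty_mem_matFeasible A⟩, fun X _ => Finset.subset_univ X, ?_⟩
  intro X hX Y hY u hu
  have hXY : X ∆ Y ∈ matFeasible (Matrix.pivot A X) := by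
    rwa [← Matrix.symmDiff_mem_matFeasible_iff hX, symmDiff_symmDiff_cancel_left]
  obtain ⟨v, hv, huv⟩ :=
    exists_pair_mem_matFeasible (Matrix.pivot_apply_eq_zero_iff hA hX) hXY hu
  exact ⟨v, hv, (Matrix.symmDiff_mem_matFeasible_iff hX _).2 huv⟩
end

section
/- Let E be a finite set and let ℱ be a nonempty collection of subsets of E, all of the same cardinality. Then the set system (E, ℱ) satisfies the Symmetric Exchange Axiom if and only if ℱ is the collection of bases of a matroid on ground set E. -/
/-!
Statement 7: A nonempty collection `ℱ` of subsets of `E`, all of the same cardinality,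
satisfies the Symmetric Exchange Axiom iff `ℱ` is the collection of bases of a matroid
on `E`, i.e. iff it satisfies the basis exchange property.
-/

open scoped symmDiff

variable {α : Type*} [DecidableEq α]

/-!
A symmetric exchange `X ∆ {u, v}` with `u, v ∈ X` would shrink `X`, which equicardinality
forbids; so for `u ∈ X \ Y` symmetric exchange is exactly basis exchange, and for `u ∈ Y \ X`
it is the reverse exchange `insert u (X.erase v) ∈ F` with `v ∈ X \ Y`. Basis exchange implies
the reverse exchange by induction on `#(Y \ X)`: exchanging some `w ≠ u` out of `Y` towards `X`
brings `Y` closer to `X` while keeping `u`, and once `Y \ X = {u}`, exchanging any element of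
`X \ Y` towards `Y` must bring in `u`.
-/

open Finset

def BasisExchange (F : Set (Finset α)) : Prop :=
  ∀ B₁ ∈ F, ∀ B₂ ∈ F, ∀ x ∈ B₁ \ B₂, ∃ y ∈ B₂ \ B₁, insert y (B₁.erase x) ∈ F

namespace Finset

theorem symmDiff_pair_eq_insert_erase {X : Finset α} {u v : α} (hu : u ∈ X) (hv : v ∉ X) :
    X ∆ {u, v} = insert v (X.erase u) := by
  ext a
  simp only [mem_symmDiff, mem_insert, mem_singleton, mem_erase]
  grind

theorem symmDiff_pair_ssubset {X : Finset α} {u v : α} (hu : u ∈ X) (hv : v ∈ X) :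
    X ∆ {u, v} ⊂ X := by
  have huv : {u, v} ⊆ X := insert_subset_iff.mpr ⟨hu, singleton_subset_iff.mpr hv⟩
  rw [symmDiff_of_ge huv]
  exact sdiff_ssubset huv (insert_nonempty _ _)

end Finset

section Exchange

variable {F : Set (Finset α)}

theorem SatisfiesSEA.basisExchange (hcard : ∀ X ∈ F, ∀ Y ∈ F, #X = #Y) (hF : SatisfiesSEA F) :
    BasisExchange F := by
  intro B₁ hB₁ B₂ hB₂ x hx
  obtain ⟨hxB₁, hxB₂⟩ := mem_sdiff.mp hx
  obtain ⟨v, hv, hmem⟩ := hF B₁ hB₁ B₂ hB₂ x (mem_symmDiff.mpr (Or.inl ⟨hxB₁, hxB₂⟩))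
  rcases mem_symmDiff.mp hv with ⟨hvB₁, -⟩ | ⟨hvB₂, hvB₁⟩
  · exact absurd (hcard _ hmem B₁ hB₁) (card_lt_card (symmDiff_pair_ssubset hxB₁ hvB₁)).ne
  · exact ⟨v, mem_sdiff.mpr ⟨hvB₂, hvB₁⟩, symmDiff_pair_eq_insert_erase hxB₁ hvB₁ ▸ hmem⟩

theorem BasisExchange.exists_insert_erase_mem (hcard : ∀ X ∈ F, ∀ Y ∈ F, #X = #Y)
    (hF : BasisExchange F) {X Y : Finset α} (hX : X ∈ F) (hY : Y ∈ F) {u : α}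
    (hu : u ∈ Y \ X) : ∃ v ∈ X \ Y, insert u (X.erase v) ∈ F := by
  induction hn : #(Y \ X) using Nat.strong_induction_on generalizing Y with
  | _ n ih =>
    by_cases hw : ∃ w ∈ Y \ X, w ≠ u
    · obtain ⟨w, hwYX, hwu⟩ := hw
      obtain ⟨z, hzXY, hY'⟩ := hF Y hY X hX w hwYX
      have hY'X : insert z (Y.erase w) \ X = (Y \ X).erase w := by
        ext a
        simp only [mem_sdiff, mem_insert, mem_erase]
        grind
      have hlt : #(insert z (Y.erase w) \ X) < n := hn ▸ hY'X ▸ card_erase_lt_of_mem hwYX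
      obtain ⟨v, hv, hmem⟩ := ih _ hlt hY' (by rw [hY'X]; exact mem_erase.mpr ⟨hwu.symm, hu⟩) rfl
      refine ⟨v, ?_, hmem⟩
      simp only [mem_sdiff, mem_insert, mem_erase] at hv hwYX ⊢
      grind
    · push Not at hw
      obtain ⟨v, hv⟩ : (X \ Y).Nonempty :=
        card_pos.mp (card_sdiff_comm (hcard X hX Y hY) ▸ card_pos.mpr ⟨u, hu⟩)
      obtain ⟨y, hy, hmem⟩ := hF X hX Y hY v hv
      exact ⟨v, hv, hw y hy ▸ hmem⟩

theorem BasisExchange.satisfiesSEA (hcard : ∀ X ∈ F, ∀ Y ∈ F, #X = #Y) (hF : BasisExchange F) :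
    SatisfiesSEA F := by
  intro X hX Y hY u hu
  rcases mem_symmDiff.mp hu with ⟨huX, huY⟩ | ⟨huY, huX⟩
  · obtain ⟨v, hv, hmem⟩ := hF X hX Y hY u (mem_sdiff.mpr ⟨huX, huY⟩)
    obtain ⟨hvY, hvX⟩ := mem_sdiff.mp hv
    exact ⟨v, mem_symmDiff.mpr (Or.inr ⟨hvY, hvX⟩), symmDiff_pair_eq_insert_erase huX hvX ▸ hmem⟩
  · obtain ⟨v, hv, hmem⟩ := hF.exists_insert_erase_mem hcard hX hY (mem_sdiff.mpr ⟨huY, huX⟩)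
    obtain ⟨hvX, hvY⟩ := mem_sdiff.mp hv
    refine ⟨v, mem_symmDiff.mpr (Or.inl ⟨hvX, hvY⟩), ?_⟩
    rwa [pair_comm, symmDiff_pair_eq_insert_erase hvX huX]

end Exchange

theorem satisfiesSEA_iff_basisExchange_general (F : Set (Finset α))
    (hcard : ∀ X ∈ F, ∀ Y ∈ F, X.card = Y.card) :
    SatisfiesSEA F ↔
      ∀ B₁ ∈ F, ∀ B₂ ∈ F, ∀ x ∈ B₁ \ B₂, ∃ y ∈ B₂ \ B₁,
        insert y (B₁.erase x) ∈ F :=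
  ⟨SatisfiesSEA.basisExchange hcard, BasisExchange.satisfiesSEA hcard⟩

/-- For a nonempty equicardinal collection of subsets of `E`, the Symmetric Exchange
Axiom is equivalent to the basis exchange property of matroids. -/
theorem satisfiesSEA_iff_basisExchange (E : Finset α) (F : Set (Finset α))
    (hne : F.Nonempty) (hsub : ∀ X ∈ F, X ⊆ E)
    (hcard : ∀ X ∈ F, ∀ Y ∈ F, X.card = Y.card) :
    SatisfiesSEA F ↔
      ∀ B₁ ∈ F, ∀ B₂ ∈ F, ∀ x ∈ B₁ \ B₂, ∃ y ∈ B₂ \ B₁,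
        insert y (B₁.erase x) ∈ F :=
  satisfiesSEA_iff_basisExchange_general F hcard
end

section
/- Let w be a double occurrence word with a decomposition w = w₁w₂w₃w₄ in which w₂ and w₄ form a share, and let w′ be any one of the three mutants w₁ w̄₂ w₃ w̄₄, w₁ w₄ w₃ w₂, or w₁ w̄₄ w₃ w̄₂ of w. Then w and w′ have the same alphabet and their intersection graphs are equal (in particular, isomorphic). -/
/-!
Whether `x` and `y` interleave depends only on the cyclic word obtained by erasing every other
letter, and is unchanged when that word is rotated or reversed. By the share condition, a letter
of `w₂w₄` does not occur in `w₁w₃`. So after erasing all letters but `x` and `y`, either both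
letters live in the share (the outer blocks become empty and each mutant is a rotation or reversal
of a rotation), or neither does (the share blocks become empty), or one does and the other does
not (every block is a power of a single letter, hence a palindrome, and `w₁w₄w₃w₂` is a rotation
of the reversal of `w₁w₂w₃w₄`). The third mutant is the first mutant of the second.
-/

variable {α : Type*} [DecidableEq α]

/-- `w` is a double occurrence word: each letter occurring in it occurs exactly
twice. -/
def IsDOW (w : List α) : Prop :=
  ∀ a ∈ w, w.count a = 2

/-- The letters `x` and `y` interleave in the cyclic word `w`: some cyclic rotation
of `w` has the form `x u x v` where `y` occurs exactly once in `u`.  This is the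
adjacency relation of the intersection graph of `w` (whose vertex set is the
alphabet of `w`). -/
def Interleaves (w : List α) (x y : α) : Prop :=
  ∃ (n : ℕ) (u v : List α), w.rotate n = [x] ++ u ++ [x] ++ v ∧ u.count y = 1

namespace List

variable {β : Type*}

theorem IsRotated.filter {l l' : List β} (h : l ~r l') (p : β → Bool) :
    l.filter p ~r l'.filter p := by
  obtain ⟨n, rfl⟩ := h
  conv_lhs => rw [← take_append_drop (n % l.length) l]
  rw [rotate_eq_drop_append_take_mod, filter_append, filter_append]
  exact isRotated_append

theorem exists_isRotated_filter_eq {p : β → Bool} {l L : List β} (h : l.filter p ~r L) :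
    ∃ l', l ~r l' ∧ l'.filter p = L := by
  obtain ⟨n, rfl⟩ := h
  rw [rotate_eq_drop_append_take_mod]
  obtain ⟨l₁, l₂, rfl, h₁, h₂⟩ :=
    filter_eq_append_iff.1 (take_append_drop (n % (l.filter p).length) (l.filter p)).symm
  exact ⟨l₂ ++ l₁, isRotated_append, by rw [filter_append, h₁, h₂]⟩

theorem isRotated_swap_reverse {l₁ l₂ l₃ l₄ : List β} (h₁ : l₁.reverse = l₁)
    (h₂ : l₂.reverse = l₂) (h₃ : l₃.reverse = l₃) (h₄ : l₄.reverse = l₄) :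
    l₁ ++ l₄ ++ l₃ ++ l₂ ~r (l₁ ++ l₂ ++ l₃ ++ l₄).reverse := by
  simp only [reverse_append, h₁, h₂, h₃, h₄]
  simpa only [append_assoc] using isRotated_append (l := l₁) (l' := l₄ ++ l₃ ++ l₂)

end List

section Interleaves

variable {w w' : List α} {x y : α}

theorem interleaves_iff_isRotated :
    Interleaves w x y ↔ ∃ u v, w ~r x :: (u ++ x :: v) ∧ u.count y = 1 := by
  simp only [Interleaves, List.IsRotated, List.cons_append, List.append_assoc]
  exact ⟨fun ⟨n, u, v, h, hu⟩ => ⟨u, v, ⟨n, h⟩, hu⟩, fun ⟨u, v, ⟨n, h⟩, hu⟩ => ⟨n, u, v, h, hu⟩⟩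

theorem interleaves_iff_of_isRotated (h : w ~r w') : Interleaves w x y ↔ Interleaves w' x y := by
  simp only [interleaves_iff_isRotated]
  exact exists₂_congr fun _ _ => and_congr_left' ⟨h.symm.trans, h.trans⟩

theorem Interleaves.reverse (h : Interleaves w x y) : Interleaves w.reverse x y := by
  obtain ⟨u, v, hw, hu⟩ := interleaves_iff_isRotated.1 h
  refine interleaves_iff_isRotated.2 ⟨u.reverse, v.reverse, ?_, by rwa [List.count_reverse]⟩
  have hrot : u.reverse ++ [x] ++ v.reverse ++ [x] ~r x :: (u.reverse ++ x :: v.reverse) := by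
    simpa only [List.append_assoc, List.singleton_append] using
      List.isRotated_concat x (u.reverse ++ [x] ++ v.reverse)
  refine hw.reverse.trans (List.IsRotated.trans ?_ hrot)
  simpa only [List.reverse_cons, List.reverse_append, List.append_assoc] using
    List.isRotated_append (l := v.reverse ++ [x]) (l' := u.reverse ++ [x])

theorem interleaves_reverse : Interleaves w.reverse x y ↔ Interleaves w x y :=
  ⟨fun h => w.reverse_reverse ▸ h.reverse, Interleaves.reverse⟩

theorem interleaves_filter {p : α → Bool} (hx : p x) (hy : p y) :
    Interleaves (w.filter p) x y ↔ Interleaves w x y := by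
  simp only [interleaves_iff_isRotated]
  constructor
  · rintro ⟨u', v', hw, hu'⟩
    obtain ⟨l, hwl, hl⟩ := List.exists_isRotated_filter_eq hw
    obtain ⟨m₁, m₂, rfl, -, -, hm₂⟩ := List.filter_eq_cons_iff.1 hl
    obtain ⟨r₁, r₂, rfl, hr₁, hr₂⟩ := List.filter_eq_append_iff.1 hm₂
    obtain ⟨q₁, q₂, rfl, hq₁, -, -⟩ := List.filter_eq_cons_iff.1 hr₂
    refine ⟨r₁ ++ q₁, q₂ ++ m₁, hwl.trans ?_, ?_⟩
    · simpa only [List.append_assoc, List.cons_append] using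
        List.isRotated_append (l := m₁) (l' := x :: (r₁ ++ (q₁ ++ x :: q₂)))
    · rw [← List.count_filter hy, List.filter_append, hr₁, List.filter_eq_nil_iff.2 hq₁,
        List.append_nil, hu']
  · rintro ⟨u, v, hw, hu⟩
    refine ⟨u.filter p, v.filter p, ?_, by rwa [List.count_filter hy]⟩
    simpa [List.filter_append, List.filter_cons, hx] using hw.filter p

theorem interleaves_congr_filter_pair
    (h : Interleaves (w.filter (· ∈ [x, y])) x y ↔ Interleaves (w'.filter (· ∈ [x, y])) x y) :
    Interleaves w x y ↔ Interleaves w' x y := by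
  rwa [interleaves_filter (by simp) (by simp), interleaves_filter (by simp) (by simp)] at h

end Interleaves

section FilterPair

variable {l : List α} {x y : α}

theorem filter_pair_eq_nil (hx : x ∉ l) (hy : y ∉ l) : l.filter (· ∈ [x, y]) = [] :=
  List.filter_eq_nil_iff.2 fun a ha => by
    simp only [List.mem_cons, List.not_mem_nil, or_false, decide_eq_true_eq]
    rintro (rfl | rfl) <;> contradiction

theorem reverse_filter_pair (h : x ∉ l ∨ y ∉ l) :
    (l.filter (· ∈ [x, y])).reverse = l.filter (· ∈ [x, y]) := by
  suffices ∃ c, ∀ a ∈ l.filter (· ∈ [x, y]), a = c by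
    obtain ⟨c, hc⟩ := this
    rw [List.eq_replicate_of_mem hc, List.reverse_replicate]
  refine h.elim (fun hx => ⟨y, ?_⟩) (fun hy => ⟨x, ?_⟩) <;>
  · intro a ha
    simp only [List.mem_filter, List.mem_cons, List.not_mem_nil, or_false, decide_eq_true_eq] at ha
    rcases ha with ⟨ha, rfl | rfl⟩ <;> first | rfl | contradiction

end FilterPair

theorem IsDOW.perm {w w' : List α} (hw : IsDOW w) (h : w.Perm w') : IsDOW w' :=
  fun a ha => h.count_eq a ▸ hw a (h.mem_iff.2 ha)

section Mutant

variable {w₁ w₂ w₃ w₄ : List α}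

theorem not_mem_outer_of_mem_share (hw : IsDOW (w₁ ++ w₂ ++ w₃ ++ w₄))
    (hshare : ∀ a ∈ w₂ ++ w₄, (w₂ ++ w₄).count a = 2) {a : α} (ha : a ∈ w₂ ++ w₄) :
    a ∉ w₁ ++ w₃ := by
  have hcount := hw a (by simp only [List.mem_append] at ha ⊢; tauto)
  have hcount' := hshare a ha
  simp only [List.count_append] at hcount hcount'
  rw [← List.count_eq_zero, List.count_append]
  omega

theorem interleaves_mutant_reverse_iff (hw : IsDOW (w₁ ++ w₂ ++ w₃ ++ w₄))
    (hshare : ∀ a ∈ w₂ ++ w₄, (w₂ ++ w₄).count a = 2) (x y : α) :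
    Interleaves (w₁ ++ w₂.reverse ++ w₃ ++ w₄.reverse) x y ↔
      Interleaves (w₁ ++ w₂ ++ w₃ ++ w₄) x y := by
  refine interleaves_congr_filter_pair ?_
  simp only [List.filter_append, List.filter_reverse]
  have hx := not_mem_outer_of_mem_share hw hshare (a := x)
  have hy := not_mem_outer_of_mem_share hw hshare (a := y)
  simp only [List.mem_append, not_or] at hx hy
  by_cases hin : (x ∈ w₂ ∨ x ∈ w₄) ∧ (y ∈ w₂ ∨ y ∈ w₄)
  · rw [filter_pair_eq_nil (hx hin.1).1 (hy hin.2).1, filter_pair_eq_nil (hx hin.1).2 (hy hin.2).2]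
    simp only [List.nil_append, List.append_nil]
    rw [← List.reverse_append, interleaves_reverse]
    exact interleaves_iff_of_isRotated List.isRotated_append
  rw [reverse_filter_pair (l := w₂) (by tauto), reverse_filter_pair (l := w₄) (by tauto)]

theorem interleaves_mutant_swap_iff (hw : IsDOW (w₁ ++ w₂ ++ w₃ ++ w₄))
    (hshare : ∀ a ∈ w₂ ++ w₄, (w₂ ++ w₄).count a = 2) (x y : α) :
    Interleaves (w₁ ++ w₄ ++ w₃ ++ w₂) x y ↔ Interleaves (w₁ ++ w₂ ++ w₃ ++ w₄) x y := by
  refine interleaves_congr_filter_pair ?_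
  simp only [List.filter_append]
  have hx := not_mem_outer_of_mem_share hw hshare (a := x)
  have hy := not_mem_outer_of_mem_share hw hshare (a := y)
  simp only [List.mem_append, not_or] at hx hy
  by_cases hin : (x ∈ w₂ ∨ x ∈ w₄) ∧ (y ∈ w₂ ∨ y ∈ w₄)
  · rw [filter_pair_eq_nil (hx hin.1).1 (hy hin.2).1, filter_pair_eq_nil (hx hin.1).2 (hy hin.2).2]
    simp only [List.nil_append, List.append_nil]
    exact interleaves_iff_of_isRotated List.isRotated_append
  by_cases hout : (x ∉ w₂ ∧ x ∉ w₄) ∧ (y ∉ w₂ ∧ y ∉ w₄)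
  · rw [filter_pair_eq_nil hout.1.1 hout.2.1, filter_pair_eq_nil hout.1.2 hout.2.2]
  rw [interleaves_iff_of_isRotated (List.isRotated_swap_reverse
      (reverse_filter_pair (l := w₁) (by tauto)) (reverse_filter_pair (l := w₂) (by tauto))
      (reverse_filter_pair (l := w₃) (by tauto)) (reverse_filter_pair (l := w₄) (by tauto))),
    interleaves_reverse]

end Mutant

/-- Mutation preserves the alphabet and the intersection graph. -/
theorem mutant_interleaves_eq (w w₁ w₂ w₃ w₄ : List α) (hw : IsDOW w)
    (hdec : w = w₁ ++ w₂ ++ w₃ ++ w₄)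
    (hshare : ∀ a ∈ w₂ ++ w₄, (w₂ ++ w₄).count a = 2)
    (w' : List α)
    (hmut : w' = w₁ ++ w₂.reverse ++ w₃ ++ w₄.reverse ∨
            w' = w₁ ++ w₄ ++ w₃ ++ w₂ ∨
            w' = w₁ ++ w₄.reverse ++ w₃ ++ w₂.reverse) :
    w.toFinset = w'.toFinset ∧
      ∀ x y : α, Interleaves w x y ↔ Interleaves w' x y := by
  subst hdec
  refine ⟨?_, fun x y => ?_⟩
  · ext a
    rcases hmut with rfl | rfl | rfl <;>
      simp only [List.mem_toFinset, List.mem_append, List.mem_reverse] <;> tauto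
  rcases hmut with rfl | rfl | rfl
  · exact (interleaves_mutant_reverse_iff hw hshare x y).symm
  · exact (interleaves_mutant_swap_iff hw hshare x y).symm
  · have hswap : (w₁ ++ w₂ ++ w₃ ++ w₄).Perm (w₁ ++ w₄ ++ w₃ ++ w₂) :=
      List.perm_iff_count.2 fun a => by simp only [List.count_append]; omega
    have hshare' : ∀ a ∈ w₄ ++ w₂, (w₄ ++ w₂).count a = 2 := fun a ha => by
      rw [List.perm_append_comm.count_eq]
      exact hshare a (List.perm_append_comm.mem_iff.1 ha)
    rw [interleaves_mutant_reverse_iff (hw.perm hswap) hshare',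
      interleaves_mutant_swap_iff hw hshare]
end
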